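/- Let X and Y be Boolean spaces, let M be a dense subset of X carrying a monoid structure with left-action components λ^X_m : X → X continuous (λ^X_m restricted to M is left multiplication by m), and let N be a dense subset of Y with a monoid structure and continuous left-action components λ^Y_n : Y → Y. Let S be a finite subset of M × N, m₁ ∈ M and n₁ ∈ N. Then the map from V(X×Y) × X × Y to itself sending (Z, x, y) to (m₁Z ∪ Sy, λ^X_{m₁}(x), λ^Y_{n₁}(y)) is well defined (its first coordinate is a closed subset of X × Y) and continuous, where m₁Z := {(λ^X_{m₁}(x'), y') : (x',y') ∈ Z} and Sy := {(m, λ^Y_n(y)) : (m,n) ∈ S}, each m being regarded as a point of X. -/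

import Mathlib

/-! The first coordinate factors as `(Z, y) ↦ (λ_{m₁} × id)(Z) ∪ Sy`: a direct image under a
closed continuous map, a finite set of points moving continuously with `y`, and a binary union.
Each of these is continuous into the Vietoris space, because the preimage of a subbasic `◊U` or
`□U` is again a subbasic set, or a finite union or intersection of open sets. -/

/-- The points of the Vietoris space of `X`: the closed subsets of `X`. -/
structure VClosed (X : Type*) [TopologicalSpace X] where
  carrier : Set X
  isClosed : IsClosed carrier

/-- The Vietoris topology on the closed subsets of `X`, generated by the subbasic sets
`◊U = {K : K ∩ U ≠ ∅}` and `□U = {K : K ⊆ U}` for `U` open. -/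
instance VClosed.instTopologicalSpace (X : Type*) [TopologicalSpace X] :
    TopologicalSpace (VClosed X) :=
  TopologicalSpace.generateFrom
    ({s | ∃ U : Set X, IsOpen U ∧ s = {K : VClosed X | (K.carrier ∩ U).Nonempty}} ∪
     {s | ∃ U : Set X, IsOpen U ∧ s = {K : VClosed X | K.carrier ⊆ U}})

namespace VClosed

variable {X X' Y ι : Type*} [TopologicalSpace X] [TopologicalSpace X'] [TopologicalSpace Y]

lemma isOpen_diamond {U : Set X} (hU : IsOpen U) :
    IsOpen {K : VClosed X | (K.carrier ∩ U).Nonempty} :=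
  TopologicalSpace.isOpen_generateFrom_of_mem (Or.inl ⟨U, hU, rfl⟩)

lemma isOpen_box {U : Set X} (hU : IsOpen U) :
    IsOpen {K : VClosed X | K.carrier ⊆ U} :=
  TopologicalSpace.isOpen_generateFrom_of_mem (Or.inr ⟨U, hU, rfl⟩)

lemma continuous_of_isOpen_diamond_box {f : Y → VClosed X}
    (hdiamond : ∀ U, IsOpen U → IsOpen {y | ((f y).carrier ∩ U).Nonempty})
    (hbox : ∀ U, IsOpen U → IsOpen {y | (f y).carrier ⊆ U}) : Continuous f := by
  rw [continuous_generateFrom_iff]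
  rintro s (⟨U, hU, rfl⟩ | ⟨U, hU, rfl⟩)
  exacts [hdiamond U hU, hbox U hU]

def map (g : X → X') (hg : IsClosedMap g) (K : VClosed X) : VClosed X' :=
  ⟨g '' K.carrier, hg _ K.isClosed⟩

lemma continuous_map {g : X → X'} (hg : Continuous g) (hg' : IsClosedMap g) :
    Continuous (map g hg') := by
  refine continuous_of_isOpen_diamond_box (fun U hU => ?_) (fun U hU => ?_)
  · simpa only [map, Set.image_inter_nonempty_iff] using isOpen_diamond (hU.preimage hg)
  · simpa only [map, Set.image_subset_iff] using isOpen_box (hU.preimage hg)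

def union (K L : VClosed X) : VClosed X :=
  ⟨K.carrier ∪ L.carrier, K.isClosed.union L.isClosed⟩

lemma continuous_union : Continuous fun KL : VClosed X × VClosed X => KL.1.union KL.2 := by
  refine continuous_of_isOpen_diamond_box (fun U hU => ?_) (fun U hU => ?_)
  · simp only [union, Set.union_inter_distrib_right, Set.union_nonempty, Set.ofPred_or]
    exact ((isOpen_diamond hU).preimage continuous_fst).union
      ((isOpen_diamond hU).preimage continuous_snd)
  · simp only [union, Set.union_subset_iff, Set.ofPred_and]
    exact ((isOpen_box hU).preimage continuous_fst).inter
      ((isOpen_box hU).preimage continuous_snd)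

def ofFinset [T1Space X] (S : Finset ι) (f : ι → X) : VClosed X :=
  ⟨f '' S, (S.finite_toSet.image f).isClosed⟩

lemma continuous_ofFinset [T1Space X] (S : Finset ι) {f : ι → Y → X}
    (hf : ∀ i ∈ S, Continuous (f i)) : Continuous fun y => ofFinset S (f · y) := by
  refine continuous_of_isOpen_diamond_box (fun U hU => ?_) (fun U hU => ?_)
  · have : {y | ((ofFinset S (f · y)).carrier ∩ U).Nonempty} = ⋃ i ∈ S, f i ⁻¹' U := by
      ext; simp [ofFinset, Set.Nonempty]
    rw [this]
    exact isOpen_biUnion fun i hi => hU.preimage (hf i hi)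
  · have : {y | (ofFinset S (f · y)).carrier ⊆ U} = ⋂ i ∈ S, f i ⁻¹' U := by
      ext; simp [ofFinset, Set.subset_def]
    rw [this]
    exact isOpen_biInter_finset fun i hi => hU.preimage (hf i hi)

end VClosed

open VClosed in
theorem stmt6_general {X Y : Type*} [TopologicalSpace X] [CompactSpace X] [T2Space X]
    [TopologicalSpace Y] [CompactSpace Y] [T2Space Y]
    (M : Set X)
    (lamX : M → X → X)
    (hlamX_cont : ∀ m : M, Continuous (lamX m))
    (N : Set Y)
    (lamY : N → Y → Y)
    (hlamY_cont : ∀ n : N, Continuous (lamY n))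
    (S : Finset (M × N)) (m₁ : M) (n₁ : N) :
    ∃ hcl : ∀ (Z : Set (X × Y)), IsClosed Z → ∀ y : Y,
        IsClosed ((fun q : X × Y => (lamX m₁ q.1, q.2)) '' Z ∪
          (fun sn : M × N => ((sn.1 : X), lamY sn.2 y)) '' (S : Set (M × N))),
      Continuous (fun p : VClosed (X × Y) × X × Y =>
        ((⟨(fun q : X × Y => (lamX m₁ q.1, q.2)) '' p.1.carrier ∪
            (fun sn : M × N => ((sn.1 : X), lamY sn.2 p.2.2)) '' (S : Set (M × N)),
            hcl p.1.carrier p.1.isClosed p.2.2⟩ : VClosed (X × Y)),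
          lamX m₁ p.2.1, lamY n₁ p.2.2)) := by
  have hg : Continuous fun q : X × Y => (lamX m₁ q.1, q.2) :=
    ((hlamX_cont m₁).comp continuous_fst).prodMk continuous_snd
  have hSy : ∀ sn ∈ S, Continuous fun y => ((sn.1 : X), lamY sn.2 y) :=
    fun sn _ => continuous_const.prodMk (hlamY_cont sn.2)
  -- Both `hcl` and the first coordinate are definitionally `union (map _ _ Z) (ofFinset S _)`.
  refine ⟨fun Z hZ y => ((map _ hg.isClosedMap ⟨Z, hZ⟩).union
    (ofFinset S fun sn => ((sn.1 : X), lamY sn.2 y))).isClosed, ?_⟩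
  have hfirst : Continuous fun p : VClosed (X × Y) × X × Y =>
      (map _ hg.isClosedMap p.1).union (ofFinset S fun sn => ((sn.1 : X), lamY sn.2 p.2.2)) :=
    continuous_union.comp (((continuous_map hg hg.isClosedMap).comp continuous_fst).prodMk
      ((continuous_ofFinset S hSy).comp (continuous_snd.comp continuous_snd)))
  exact hfirst.prodMk (((hlamX_cont m₁).comp (continuous_fst.comp continuous_snd)).prodMk
    ((hlamY_cont n₁).comp (continuous_snd.comp continuous_snd)))

/-- Continuity of the left-action components of `◊(M,N)` on the binary Schützenberger
product of Boolean spaces `◊(X,Y) = V(X×Y) × X × Y`: for dense internal monoids `M ⊆ X`,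
`N ⊆ Y` with continuous left-action components extending multiplication, a finite
`S ⊆ M × N`, `m₁ ∈ M` and `n₁ ∈ N`, the map
`(Z,x,y) ↦ (m₁Z ∪ Sy, λ^X_{m₁}(x), λ^Y_{n₁}(y))` has closed first coordinate and is
continuous. -/
theorem stmt6 {X Y : Type*} [TopologicalSpace X] [CompactSpace X] [T2Space X]
    [TotallyDisconnectedSpace X] [TopologicalSpace Y] [CompactSpace Y] [T2Space Y]
    [TotallyDisconnectedSpace Y]
    (M : Set X) (hM : Dense M) [Monoid M]
    (lamX : M → X → X)
    (hlamX_cont : ∀ m : M, Continuous (lamX m))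
    (hlamX : ∀ m m' : M, lamX m (m' : X) = ((m * m' : M) : X))
    (N : Set Y) (hN : Dense N) [Monoid N]
    (lamY : N → Y → Y)
    (hlamY_cont : ∀ n : N, Continuous (lamY n))
    (hlamY : ∀ n n' : N, lamY n (n' : Y) = ((n * n' : N) : Y))
    (S : Finset (M × N)) (m₁ : M) (n₁ : N) :
    ∃ hcl : ∀ (Z : Set (X × Y)), IsClosed Z → ∀ y : Y,
        IsClosed ((fun q : X × Y => (lamX m₁ q.1, q.2)) '' Z ∪
          (fun sn : M × N => ((sn.1 : X), lamY sn.2 y)) '' (S : Set (M × N))),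
      Continuous (fun p : VClosed (X × Y) × X × Y =>
        ((⟨(fun q : X × Y => (lamX m₁ q.1, q.2)) '' p.1.carrier ∪
            (fun sn : M × N => ((sn.1 : X), lamY sn.2 p.2.2)) '' (S : Set (M × N)),
            hcl p.1.carrier p.1.isClosed p.2.2⟩ : VClosed (X × Y)),
          lamX m₁ p.2.1, lamY n₁ p.2.2)) :=
  stmt6_general M lamX hlamX_cont N lamY hlamY_cont S m₁ n₁
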